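/- arXiv:2102.06264 — 2 statements merged into one kernel-verified Lean document; each statement's English description precedes it below -/
import Mathlib

section
/- Let R be a commutative ring and A an R-algebra that is separable as an R-algebra and finitely generated projective as an R-module. Then a right A-module M is projective as an A-module if and only if it is projective as an R-module. -/
/-!
If `M` is projective over `Aᵐᵒᵖ`, it is projective over `R` because `Aᵐᵒᵖ` is.
Conversely, the action map `A ⊗[R] M → M`, `a ⊗ m ↦ m a`, is a map of right `A`-modules whose
source is `A`-projective when `M` is `R`-projective. A separability idempotent
`e = ∑ xᵢ ⊗ yᵢ` splits it by `m ↦ ∑ yᵢ ⊗ m xᵢ`: the identity `(a ⊗ 1) e = e (1 ⊗ a)` makes this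
splitting `A`-linear, and `∑ xᵢ yᵢ = 1` makes it a section. So `M` is a direct summand of an
`A`-projective module.
-/

open TensorProduct

/-- An `R`-algebra `A` is separable if it admits a separability idempotent, i.e. an element
`e` of `A ⊗[R] A` mapping to `1` under multiplication and satisfying `(a ⊗ 1) * e = e * (1 ⊗ a)`
for all `a` (this is equivalent to `A` being projective over its enveloping algebra). -/
def IsSeparableAlgebra (R : Type*) (A : Type*) [CommRing R] [Ring A] [Algebra R A] : Prop :=
  ∃ e : A ⊗[R] A, (LinearMap.mul' R A) e = 1 ∧
    ∀ a : A, (a ⊗ₜ[R] (1 : A)) * e = e * ((1 : A) ⊗ₜ[R] a)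

open MulOpposite

theorem Module.Projective.trans {R S : Type*} [CommSemiring R] [Semiring S] [Algebra R S]
    (M : Type*) [AddCommMonoid M] [Module S M] [Module R M] [IsScalarTower R S M]
    [Module.Projective S M] [Module.Projective R S] : Module.Projective R M := by
  obtain ⟨s, hs⟩ := ‹Module.Projective S M›
  have : Module.Projective R (M →₀ S) := by
    classical exact .of_equiv (finsuppLequivDFinsupp R).symm
  exact .of_split (s.restrictScalars R) ((Finsupp.linearCombination S id).restrictScalars R)
    (LinearMap.ext hs)

theorem MulOpposite.projective_self (A : Type*) [Semiring A] : Module.Projective Aᵐᵒᵖ A :=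
  .of_equiv' (R := Aᵐᵒᵖ) (M := Aᵐᵒᵖ)
    { toFun := unop, invFun := op, map_add' := fun _ _ => rfl, map_smul' := fun _ _ => rfl,
      left_inv := fun _ => rfl, right_inv := fun _ => rfl }

section TensorSection

variable (R A M : Type*) [CommSemiring R] [Semiring A] [Algebra R A]
  [AddCommMonoid M] [Module Aᵐᵒᵖ M] [Module R M] [IsScalarTower R Aᵐᵒᵖ M]

noncomputable def lsmulTensor : A ⊗[R] M →ₗ[Aᵐᵒᵖ] M :=
  AlgebraTensorModule.lift
    { toFun := fun a => Algebra.lsmul R R M (op a)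
      map_add' := fun a b => by simp
      map_smul' := fun b a => LinearMap.ext fun m => mul_smul b (op a) m }

@[simp]
theorem lsmulTensor_tmul (a : A) (m : M) : lsmulTensor R A M (a ⊗ₜ m) = op a • m := rfl

noncomputable def swapSMulTensor : A ⊗[R] A →ₗ[R] M →ₗ[R] A ⊗[R] M :=
  TensorProduct.lift
    ((LinearMap.llcomp R M M (A ⊗[R] M)).compl₁₂ (TensorProduct.mk R A M)
      ((Algebra.lsmul R R M).toLinearMap ∘ₗ (opLinearEquiv R).toLinearMap)).flip

@[simp]
theorem swapSMulTensor_tmul (x y : A) (m : M) :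
    swapSMulTensor R A M (x ⊗ₜ y) m = y ⊗ₜ (op x • m) := rfl

variable {R A M}

theorem swapSMulTensor_tmul_one_mul (a : A) (t : A ⊗[R] A) (m : M) :
    swapSMulTensor R A M ((a ⊗ₜ 1) * t) m = swapSMulTensor R A M t (op a • m) := by
  induction t using TensorProduct.induction_on with
  | zero => simp
  | tmul x y => simp [mul_smul]
  | add t₁ t₂ h₁ h₂ => simp only [mul_add, map_add, LinearMap.add_apply, h₁, h₂]

theorem swapSMulTensor_mul_one_tmul (a : A) (t : A ⊗[R] A) (m : M) :
    swapSMulTensor R A M (t * (1 ⊗ₜ a)) m = op a • swapSMulTensor R A M t m := by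
  induction t using TensorProduct.induction_on with
  | zero => simp
  | tmul x y => simp [smul_tmul']
  | add t₁ t₂ h₁ h₂ => simp only [add_mul, map_add, LinearMap.add_apply, h₁, h₂, smul_add]

theorem lsmulTensor_swapSMulTensor (t : A ⊗[R] A) (m : M) :
    lsmulTensor R A M (swapSMulTensor R A M t m) = op (LinearMap.mul' R A t) • m := by
  induction t using TensorProduct.induction_on with
  | zero => simp
  | tmul x y => simp [mul_smul]
  | add t₁ t₂ h₁ h₂ => simp only [map_add, LinearMap.add_apply, h₁, h₂, op_add, add_smul]

noncomputable def tensorSection (e : A ⊗[R] A) (he : ∀ a : A, (a ⊗ₜ 1) * e = e * (1 ⊗ₜ a)) :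
    M →ₗ[Aᵐᵒᵖ] A ⊗[R] M where
  __ := swapSMulTensor R A M e
  map_smul' b m := by
    rw [AddHom.toFun_eq_coe, LinearMap.coe_toAddHom, RingHom.id_apply, ← op_unop b,
      ← swapSMulTensor_tmul_one_mul, he, swapSMulTensor_mul_one_tmul]

theorem lsmulTensor_comp_tensorSection (e : A ⊗[R] A)
    (he : ∀ a : A, (a ⊗ₜ 1) * e = e * (1 ⊗ₜ a)) (he₁ : LinearMap.mul' R A e = 1) :
    lsmulTensor R A M ∘ₗ tensorSection e he = LinearMap.id :=
  LinearMap.ext fun m => by simp [tensorSection, lsmulTensor_swapSMulTensor, he₁]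

end TensorSection

theorem Module.Projective.of_isSeparableAlgebra {R A M : Type*} [CommRing R] [Ring A]
    [Algebra R A] (hsep : IsSeparableAlgebra R A) [AddCommMonoid M] [Module Aᵐᵒᵖ M]
    [Module R M] [IsScalarTower R Aᵐᵒᵖ M] [Module.Projective R M] :
    Module.Projective Aᵐᵒᵖ M := by
  obtain ⟨e, he₁, he⟩ := hsep
  have := MulOpposite.projective_self A
  exact .of_split (tensorSection e he) (lsmulTensor R A M)
    (lsmulTensor_comp_tensorSection e he he₁)

theorem projective_over_algebra_iff_projective_over_base_general
    (R A M : Type*) [CommRing R] [Ring A] [Algebra R A]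
    (hsep : IsSeparableAlgebra R A)
    (hproj : Module.Projective R A)
    [AddCommGroup M] [Module Aᵐᵒᵖ M] [Module R M] [IsScalarTower R Aᵐᵒᵖ M] :
    Module.Projective Aᵐᵒᵖ M ↔ Module.Projective R M := by
  have : Module.Projective R Aᵐᵒᵖ := .of_equiv (opLinearEquiv R)
  exact ⟨fun _ => .trans (S := Aᵐᵒᵖ) M, fun _ => .of_isSeparableAlgebra hsep⟩

/-- Let `R` be a commutative ring and `A` an `R`-algebra that is separable as an `R`-algebra and
finitely generated projective as an `R`-module.  Then a right `A`-module `M` (encoded as a module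
over `Aᵐᵒᵖ`) is projective as an `A`-module if and only if it is projective as an `R`-module. -/
theorem projective_over_algebra_iff_projective_over_base
    (R A M : Type*) [CommRing R] [Ring A] [Algebra R A]
    (hsep : IsSeparableAlgebra R A)
    (hproj : Module.Projective R A) (hfin : Module.Finite R A)
    [AddCommGroup M] [Module Aᵐᵒᵖ M] [Module R M] [IsScalarTower R Aᵐᵒᵖ M] :
    Module.Projective Aᵐᵒᵖ M ↔ Module.Projective R M :=
  projective_over_algebra_iff_projective_over_base_general R A M hsep hproj
end

section
/- Let A be an associative algebra over a commutative ring R, Z an (A^op, A)-bimodule that is an (A^op,A)-progenerator satisfying rz = zr for all r ∈ R, z ∈ Z, and θ : Z → Z an R-linear map with (a^op z b)^θ = b^op z^θ a and z^θθ = z. For P a finitely generated projective right A-module define P* = Hom_A(P, Z) with right A-action (φa)x = a^op(φx), and ω_P : P → P** by (ω_P x)φ = (φx)^θ. Then P* is finitely generated projective as a right A-module and ω_P is an isomorphism for every finitely generated projective right A-module P. -/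
/-!
`P` is a direct summand of `Aᵏ` and `A` is one of `Zⁿ`, so `P` is a direct summand of some `Zᵐ`.
Then `P*` is a direct summand of `Hom(Zᵐ, Z) ≅ End(Z)ᵐ`, and by naturality of `ω` everything
reduces to `P = Zᵐ`. There an `L⁻¹`-semilinear `g` is `φ ↦ θ (φ x)` for `x = (θ (g prⱼ))ⱼ`,
because `θ (b z) = L⁻¹ b • θ z` and `θ ∘ θ = id`.
-/

open MulOpposite

namespace Module

def IsRetract (R M N : Type*) [Semiring R] [AddCommMonoid M] [AddCommMonoid N] [Module R M]
    [Module R N] : Prop :=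
  ∃ (i : M →ₗ[R] N) (p : N →ₗ[R] M), p ∘ₗ i = LinearMap.id

namespace IsRetract

variable {R M N Q : Type*} [Semiring R]
  [AddCommMonoid M] [AddCommMonoid N] [AddCommMonoid Q] [Module R M] [Module R N] [Module R Q]

theorem of_linearEquiv (e : M ≃ₗ[R] N) : IsRetract R M N :=
  ⟨e, e.symm, by ext; simp⟩

theorem trans (hMN : IsRetract R M N) (hNQ : IsRetract R N Q) : IsRetract R M Q := by
  obtain ⟨i, p, hpi⟩ := hMN
  obtain ⟨j, q, hqj⟩ := hNQ
  refine ⟨j ∘ₗ i, p ∘ₗ q, ?_⟩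
  rw [LinearMap.comp_assoc, ← LinearMap.comp_assoc i, hqj, LinearMap.id_comp, hpi]

theorem pi (h : IsRetract R M N) (ι : Type*) : IsRetract R (ι → M) (ι → N) := by
  obtain ⟨i, p, hpi⟩ := h
  refine ⟨i.compLeft ι, p.compLeft ι, ?_⟩
  ext x j
  exact LinearMap.congr_fun hpi (x j)

theorem linearMap (h : IsRetract R M N) (S Z : Type*) [Semiring S] [AddCommMonoid Z] [Module R Z]
    [Module S Z] [SMulCommClass R S Z] : IsRetract S (M →ₗ[R] Z) (N →ₗ[R] Z) := by
  obtain ⟨i, p, hpi⟩ := h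
  refine ⟨LinearMap.lcomp S Z p, LinearMap.lcomp S Z i, ?_⟩
  ext φ x
  simp [← LinearMap.comp_apply p i, hpi]

theorem finite [Module.Finite R N] (h : IsRetract R M N) : Module.Finite R M := by
  obtain ⟨i, p, hpi⟩ := h
  exact .of_surjective p (LinearMap.surjective_of_comp_eq_id i p hpi)

theorem projective [Module.Projective R N] (h : IsRetract R M N) : Module.Projective R M := by
  obtain ⟨i, p, hpi⟩ := h
  exact .of_split i p hpi

theorem exists_pi_fin_of_finite_projective {Z : Type*} [AddCommMonoid Z] [Module R Z] {n : ℕ}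
    (hR : IsRetract R R (Fin n → Z)) [Module.Finite R M] [Module.Projective R M] :
    ∃ m : ℕ, IsRetract R M (Fin m → Z) := by
  obtain ⟨k, p, i, -, -, hpi⟩ := Module.Finite.exists_comp_eq_id_of_projective R M
  have hM : IsRetract R M (Fin k → R) := ⟨i, p, hpi⟩
  exact ⟨k * n, (hM.trans (hR.pi (Fin k))).trans <| of_linearEquiv <|
    (LinearEquiv.curry R Z (Fin k) (Fin n)).symm.trans
      (LinearEquiv.funCongrLeft R Z finProdFinEquiv.symm)⟩

theorem eq_of_forall_linearMap_apply_eq {Z ι : Type*} [AddCommMonoid Z] [Module R Z]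
    (h : IsRetract R M (ι → Z)) {x y : M} (hxy : ∀ φ : M →ₗ[R] Z, φ x = φ y) : x = y := by
  obtain ⟨i, p, hpi⟩ := h
  exact LinearMap.injective_of_comp_eq_id i p hpi <| funext fun j => hxy (LinearMap.proj j ∘ₗ i)

end IsRetract
end Module

section EndModule

variable {R Z : Type*} [Semiring R] [AddCommMonoid Z] [Module R Z] (ι : Type*) [Fintype ι]
  [DecidableEq ι]

instance Module.End.finite_linearMap_pi : Module.Finite (Module.End R Z) ((ι → Z) →ₗ[R] Z) :=
  .equiv (LinearMap.lsum R (fun _ : ι => Z) (Module.End R Z))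

instance Module.End.projective_linearMap_pi :
    Module.Projective (Module.End R Z) ((ι → Z) →ₗ[R] Z) :=
  .of_equiv (LinearMap.lsum R (fun _ : ι => Z) (Module.End R Z))

variable {ι} {M N : Type*} [AddCommMonoid M] [Module R M] [AddCommMonoid N] [Module R N]
  {σ : Module.End R Z →+* R} {F : Type*} [FunLike F Z Z] {θ : F}

theorem exists_forall_eq_theta_apply_pi [AddMonoidHomClass F Z Z]
    (hθ : ∀ (b : Module.End R Z) (z : Z), θ (b z) = σ b • θ z)
    (hθθ : ∀ z, θ (θ z) = z) (g : ((ι → Z) →ₗ[R] Z) →ₛₗ[σ] Z) :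
    ∃ x : ι → Z, ∀ φ, g φ = θ (φ x) := by
  refine ⟨fun j => θ (g (LinearMap.proj j)), fun φ => ?_⟩
  have hφ : φ = ∑ j, (φ ∘ₗ LinearMap.single R (fun _ => Z) j) • LinearMap.proj j := by
    ext x
    simp [← map_sum, Finset.univ_sum_single]
  calc g φ = ∑ j, σ (φ ∘ₗ LinearMap.single R (fun _ => Z) j) • g (LinearMap.proj j) := by
        conv_lhs => rw [hφ]
        simp
    _ = ∑ j, θ ((φ ∘ₗ LinearMap.single R (fun _ => Z) j) (θ (g (LinearMap.proj j)))) := by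
        simp only [hθ, hθθ]
    _ = θ (φ (fun j => θ (g (LinearMap.proj j)))) := by
        rw [← map_sum]
        conv_rhs => rw [hφ]
        simp

theorem Module.IsRetract.exists_forall_eq_theta_apply (h : Module.IsRetract R M N)
    (hN : ∀ g : (N →ₗ[R] Z) →ₛₗ[σ] Z, ∃ y : N, ∀ ψ, g ψ = θ (ψ y))
    (g : (M →ₗ[R] Z) →ₛₗ[σ] Z) : ∃ x : M, ∀ φ, g φ = θ (φ x) := by
  obtain ⟨i, p, hpi⟩ := h
  obtain ⟨y, hy⟩ := hN (g.comp <| LinearMap.lcomp (Module.End R Z) Z i)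
  refine ⟨p y, fun φ => ?_⟩
  have := hy (φ ∘ₗ p)
  simp only [LinearMap.comp_apply, LinearMap.lcomp_apply'] at this
  rwa [LinearMap.comp_assoc, hpi, LinearMap.comp_id] at this

end EndModule

/-- Right `A`-modules are `Aᵐᵒᵖ`-modules and the left `Aᵒᵖ`-action on `Z` is `L`; the right
`A`-module `P*` appears as the `End(Z)`-module `P →ₗ[Aᵐᵒᵖ] Z` (acting by postcomposition), and
`P**` as the maps `P* → Z` that are semilinear along `L⁻¹`. -/
theorem dual_of_finite_projective_is_finite_projective_and_double_dual_bijective_general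
    (R A : Type u) [CommRing R] [Ring A]
    (Z : Type u) [AddCommGroup Z] [Module Aᵐᵒᵖ Z] [Module R Z]
    (L : Aᵐᵒᵖ →+* Module.End Aᵐᵒᵖ Z)
    -- `Z` is an `(Aᵒᵖ, A)`-progenerator:
    (hgen : ∃ (n : ℕ) (i : A →ₗ[Aᵐᵒᵖ] (Fin n → Z)) (π : (Fin n → Z) →ₗ[Aᵐᵒᵖ] A),
      π.comp i = LinearMap.id)
    (hbij : Function.Bijective L)
    -- the involution `θ`:
    (θ : Z →ₗ[R] Z)
    (hθθ : ∀ z : Z, θ (θ z) = z)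
    (hθ : ∀ (a b : A) (z : Z),
      θ (op b • (L (op a) z)) = op a • (L (op b) (θ z)))
    -- a finitely generated projective right `A`-module `P`:
    (P : Type u) [AddCommGroup P] [Module Aᵐᵒᵖ P]
    [Module.Finite Aᵐᵒᵖ P] [Module.Projective Aᵐᵒᵖ P] :
    Module.Finite (Module.End Aᵐᵒᵖ Z) (P →ₗ[Aᵐᵒᵖ] Z) ∧
    Module.Projective (Module.End Aᵐᵒᵖ Z) (P →ₗ[Aᵐᵒᵖ] Z) ∧
    (∀ x y : P, (∀ φ : P →ₗ[Aᵐᵒᵖ] Z, θ (φ x) = θ (φ y)) → x = y) ∧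
    (∀ g : (P →ₗ[Aᵐᵒᵖ] Z) →ₛₗ[((RingEquiv.ofBijective L hbij).symm :
            Module.End Aᵐᵒᵖ Z ≃+* Aᵐᵒᵖ).toRingHom] Z,
      ∃ x : P, ∀ φ : P →ₗ[Aᵐᵒᵖ] Z, g φ = θ (φ x)) := by
  set e := RingEquiv.ofBijective L hbij
  have hθe : ∀ (b : Module.End Aᵐᵒᵖ Z) (z : Z), θ (b z) = e.symm.toRingHom b • θ z := by
    intro b z
    have hb : L (e.symm b) = b := e.apply_symm_apply b
    simpa [hb] using hθ (unop (e.symm b)) 1 z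
  obtain ⟨n, i, π, hπi⟩ := hgen
  have hA : Module.IsRetract Aᵐᵒᵖ Aᵐᵒᵖ (Fin n → Z) :=
    (Module.IsRetract.of_linearEquiv (opLinearEquiv Aᵐᵒᵖ).symm).trans ⟨i, π, hπi⟩
  obtain ⟨m, hP⟩ := hA.exists_pi_fin_of_finite_projective (M := P)
  have hPdual := hP.linearMap (Module.End Aᵐᵒᵖ Z) Z
  refine ⟨hPdual.finite, hPdual.projective, fun x y hxy => ?_, ?_⟩
  · exact hP.eq_of_forall_linearMap_apply_eq fun φ => Function.LeftInverse.injective hθθ (hxy φ)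
  · exact hP.exists_forall_eq_theta_apply (exists_forall_eq_theta_apply_pi hθe hθθ)

/-- Let `A` be an associative algebra over a commutative ring `R` and `Z` an
`(Aᵒᵖ, A)`-bimodule which is an `(Aᵒᵖ, A)`-progenerator, with `rz = zr` for `r ∈ R`, and
`θ : Z → Z` an `R`-linear map with `(aᵒᵖ z b)^θ = bᵒᵖ z^θ a` and `θ ∘ θ = id`.
For `P` a finitely generated projective right `A`-module, `P* = Hom_A(P, Z)` with the right
`A`-action `(φa)x = aᵒᵖ(φx)` is finitely generated projective, and the double-dual map
`ω_P : P → P**`, `(ω_P x)(φ) = (φ x)^θ`, is an isomorphism.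

Encoding: right `A`-modules are `Aᵐᵒᵖ`-modules; the left `Aᵒᵖ`-action on `Z` is encoded by
a ring homomorphism `L : Aᵐᵒᵖ →+* Module.End Aᵐᵒᵖ Z` (so `aᵒᵖ z = L (op a) z`), which is
bijective precisely because `Z` is a progenerator; the right `A`-module structure on
`P* = P →ₗ[Aᵐᵒᵖ] Z` is then the module structure over `B = Module.End Aᵐᵒᵖ Z` given by
postcomposition, transported along `L`; and `P**` consists of the maps `P* → Z` that are
semilinear with respect to the inverse of `L`. -/
theorem dual_of_finite_projective_is_finite_projective_and_double_dual_bijective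
    (R A : Type u) [CommRing R] [Ring A] [Algebra R A]
    (Z : Type u) [AddCommGroup Z] [Module Aᵐᵒᵖ Z] [Module R Z] [IsScalarTower R Aᵐᵒᵖ Z]
    (L : Aᵐᵒᵖ →+* Module.End Aᵐᵒᵖ Z)
    -- `rz = zr` for all `r : R`, `z : Z`:
    (hRL : ∀ (r : R) (z : Z), L (op (algebraMap R A r)) z = op (algebraMap R A r) • z)
    -- `Z` is an `(Aᵒᵖ, A)`-progenerator:
    [Module.Finite Aᵐᵒᵖ Z] [Module.Projective Aᵐᵒᵖ Z]
    (hgen : ∃ (n : ℕ) (i : A →ₗ[Aᵐᵒᵖ] (Fin n → Z)) (π : (Fin n → Z) →ₗ[Aᵐᵒᵖ] A),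
      π.comp i = LinearMap.id)
    (hbij : Function.Bijective L)
    -- the involution `θ`:
    (θ : Z →ₗ[R] Z)
    (hθθ : ∀ z : Z, θ (θ z) = z)
    (hθ : ∀ (a b : A) (z : Z),
      θ (op b • (L (op a) z)) = op a • (L (op b) (θ z)))
    -- a finitely generated projective right `A`-module `P`:
    (P : Type u) [AddCommGroup P] [Module Aᵐᵒᵖ P]
    [Module.Finite Aᵐᵒᵖ P] [Module.Projective Aᵐᵒᵖ P] :
    Module.Finite (Module.End Aᵐᵒᵖ Z) (P →ₗ[Aᵐᵒᵖ] Z) ∧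
    Module.Projective (Module.End Aᵐᵒᵖ Z) (P →ₗ[Aᵐᵒᵖ] Z) ∧
    (∀ x y : P, (∀ φ : P →ₗ[Aᵐᵒᵖ] Z, θ (φ x) = θ (φ y)) → x = y) ∧
    (∀ g : (P →ₗ[Aᵐᵒᵖ] Z) →ₛₗ[((RingEquiv.ofBijective L hbij).symm :
            Module.End Aᵐᵒᵖ Z ≃+* Aᵐᵒᵖ).toRingHom] Z,
      ∃ x : P, ∀ φ : P →ₗ[Aᵐᵒᵖ] Z, g φ = θ (φ x)) :=
  dual_of_finite_projective_is_finite_projective_and_double_dual_bijective_general R A Z L hgen hbij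
    θ hθθ hθ P
end
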